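/- arXiv:1606.06874 — 2 statements merged into one kernel-verified Lean document; each statement's English description precedes it below -/
import Mathlib

section
/- For every integer n ≥ 255 one has log n ≥ 0.75·log p_n. -/
/-- `nthPrime n` is the `n`-th prime number, with `nthPrime 1 = 2`, `nthPrime 2 = 3`, … -/
noncomputable def nthPrime (n : ℕ) : ℕ := Nat.nth Nat.Prime (n - 1)

/-!
Since `π (p_n) = n`, the claim is `p ^ 3 ≤ π p ^ 4` for every prime `p` with `π p ≥ 255`, i.e.
`p ≥ p_255 = 1613`. For `p ≥ 17 ^ 4` this follows from Chebyshev's bound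
`π x ≥ (x log 2 - log (x + 1)) / log x`, which exceeds `x ^ (3 / 4)` as soon as `x ^ (1 / 4) ≥ 17`.
Below `17 ^ 4` it is a finite check: if `b ^ 3 ≤ (π a + 1) ^ 4`, then every prime `p ∈ (a, b]` has
`p ^ 3 ≤ b ^ 3 ≤ π p ^ 4`, so 47 checkpoints suffice, the primes between them being counted by
trial division evaluated in the kernel.
-/

open Real
open scoped Nat.Prime

def NoDivisorFrom (n d : ℕ) : Prop := ∀ m, d ≤ m → m * m ≤ n → ¬ m ∣ n

theorem noDivisorFrom_iff_of_skip {n d e : ℕ} (hde : d ≤ e)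
    (hskip : ∀ m, d < m → m < e → ¬ m ∣ n) :
    NoDivisorFrom n d ↔ n < d * d ∨ (¬ d ∣ n ∧ NoDivisorFrom n e) := by
  constructor
  · intro h
    by_cases hn : n < d * d
    · exact .inl hn
    · exact .inr ⟨h d le_rfl (by omega), fun m hm => h m (by omega)⟩
  · rintro (hn | ⟨hd, he⟩) m hm hmn
    · nlinarith [Nat.mul_le_mul hm hm]
    · rcases hm.eq_or_lt with rfl | hm
      · exact hd
      · rcases lt_or_ge m e with hme | hme
        · exact hskip m hm hme
        · exact he m hme hmn

theorem noDivisorFrom_of_lt {n d : ℕ} (h : n < d * d) : NoDivisorFrom n d :=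
  fun m hm hmn => absurd (Nat.mul_le_mul hm hm) (by omega)

/-- Trial division of `n` by `d, d + 2, d + 6, d + 8, …`, which for `d % 6 = 5` are the numbers
from `d` on that are coprime to `6`; `k` is fuel. It is written with `Nat.rec`, as is
`primeCountIn`, because the kernel evaluates that much faster than structural recursion. -/
def trialDivisionFrom (n k : ℕ) : ℕ → Bool :=
  Nat.rec (motive := fun _ => ℕ → Bool) (fun _ => true)
    (fun _ ih d => n.blt (d * d) || (!(n % d).beq 0 &&
      (n.blt ((d + 2) * (d + 2)) || (!(n % (d + 2)).beq 0 && ih (d + 6))))) k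

theorem trialDivisionFrom_iff {n k d : ℕ} (h2 : ¬ 2 ∣ n) (h3 : ¬ 3 ∣ n) (hd : d % 6 = 5)
    (hn : n < (d + 6 * k) * (d + 6 * k)) : trialDivisionFrom n k d = true ↔ NoDivisorFrom n d := by
  induction k generalizing d with
  | zero => exact iff_of_true rfl (noDivisorFrom_of_lt hn)
  | succ k ih =>
    have skip₁ : ∀ m, d < m → m < d + 2 → ¬ m ∣ n := by
      intro m h₁ h₂ hm
      obtain rfl : m = d + 1 := by omega
      exact h2 ((Nat.dvd_of_mod_eq_zero (by omega)).trans hm)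
    have skip₂ : ∀ m, d + 2 < m → m < d + 6 → ¬ m ∣ n := by
      intro m h₁ h₂ hm
      obtain rfl | rfl | rfl : m = d + 3 ∨ m = d + 4 ∨ m = d + 5 := by omega
      · exact h2 ((Nat.dvd_of_mod_eq_zero (by omega)).trans hm)
      · exact h3 ((Nat.dvd_of_mod_eq_zero (by omega)).trans hm)
      · exact h2 ((Nat.dvd_of_mod_eq_zero (by omega)).trans hm)
    rw [noDivisorFrom_iff_of_skip (by omega) skip₁, noDivisorFrom_iff_of_skip (by omega) skip₂,
      ← ih (by omega) (by rwa [show d + 6 + 6 * k = d + 6 * (k + 1) by ring])]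
    simp [trialDivisionFrom, Nat.dvd_iff_mod_eq_zero, Bool.eq_false_iff, Nat.beq_eq]

theorem prime_iff_noDivisorFrom_two {n : ℕ} : n.Prime ↔ 2 ≤ n ∧ NoDivisorFrom n 2 := by
  simp only [Nat.prime_def_le_sqrt, NoDivisorFrom, Nat.le_sqrt]

theorem prime_iff_noDivisorFrom_five {n : ℕ} (h2 : n ≠ 2) (h3 : n ≠ 3) :
    n.Prime ↔ 5 ≤ n ∧ ¬ 2 ∣ n ∧ ¬ 3 ∣ n ∧ NoDivisorFrom n 5 := by
  constructor
  · intro hp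
    have hdvd := hp.eq_one_or_self_of_dvd
    have h4 : n ≠ 4 := by rintro rfl; norm_num at hp
    refine ⟨by have := hp.two_le; omega, fun h => ?_, fun h => ?_, fun m hm hmn h => ?_⟩
    · rcases hdvd 2 h with h | h <;> omega
    · rcases hdvd 3 h with h | h <;> omega
    · rcases hdvd m h with rfl | rfl
      · omega
      · nlinarith
  · rintro ⟨h5, h2, h3, h⟩
    have skip : ∀ m, 2 < m → m < 5 → ¬ m ∣ n := by
      intro m h₁ h₂ hm
      obtain rfl | rfl : m = 3 ∨ m = 4 := by omega
      · exact h3 hm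
      · exact h2 ((by norm_num : 2 ∣ 4).trans hm)
    exact prime_iff_noDivisorFrom_two.mpr
      ⟨by omega, (noDivisorFrom_iff_of_skip (by norm_num) skip).mpr (.inr ⟨h2, h⟩)⟩

def isPrimeByTrialDivision (n : ℕ) : Bool :=
  n.beq 2 || n.beq 3 ||
    (Nat.ble 5 n && !(n % 2).beq 0 && !(n % 3).beq 0 && trialDivisionFrom n n 5)

theorem isPrimeByTrialDivision_iff (n : ℕ) : isPrimeByTrialDivision n = true ↔ n.Prime := by
  by_cases h2 : n = 2
  · subst h2; simp [isPrimeByTrialDivision, Nat.prime_two]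
  by_cases h3 : n = 3
  · subst h3; simp [isPrimeByTrialDivision, Nat.prime_three]
  rw [prime_iff_noDivisorFrom_five h2 h3]
  simp only [isPrimeByTrialDivision, Bool.or_eq_true, Bool.and_eq_true, Bool.not_eq_true',
    Bool.eq_false_iff, ne_eq, Nat.beq_eq, Nat.ble_eq, ← Nat.dvd_iff_mod_eq_zero, h2, h3, false_or,
    and_assoc]
  exact and_congr_right fun _ => and_congr_right fun hn2 => and_congr_right fun hn3 =>
    trialDivisionFrom_iff hn2 hn3 rfl (by nlinarith)

/-- The number of primes in `[a, a + L)`, by binary splitting with fuel `f`, which keeps the depth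
of kernel reduction logarithmic in `L`. -/
def primeCountIn (f : ℕ) : ℕ → ℕ → ℕ :=
  Nat.rec (motive := fun _ => ℕ → ℕ → ℕ)
    (fun a L => Nat.rec (motive := fun _ => ℕ) 0
      (fun k c => c + cond (isPrimeByTrialDivision (a + k)) 1 0) L)
    (fun _ ih a L => cond (L.ble 1) (ih a L) (ih a (L / 2) + ih (a + L / 2) (L - L / 2))) f

theorem count_add_primeCountIn (f a L : ℕ) :
    Nat.count Nat.Prime a + primeCountIn f a L = Nat.count Nat.Prime (a + L) := by
  induction f generalizing a L with
  | zero =>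
    induction L with
    | zero => rfl
    | succ L ih =>
      change _ + (primeCountIn 0 a L + cond (isPrimeByTrialDivision (a + L)) 1 0) = _
      rw [← add_assoc, ih, ← add_assoc, Nat.count_succ]
      simp only [Bool.cond_eq_ite, isPrimeByTrialDivision_iff]
  | succ f ih =>
    change _ + cond (L.ble 1) (primeCountIn f a L)
      (primeCountIn f a (L / 2) + primeCountIn f (a + L / 2) (L - L / 2)) = _
    cases L.ble 1
    · rw [cond_false, ← add_assoc, ih, ih]
      congr 1
      omega
    · exact ih a L

theorem pow_three_le_primeCounting_pow_four_of_mem_Ioc {a b p : ℕ} (hp : p.Prime)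
    (hpab : p ∈ Set.Ioc a b) (h : b ^ 3 ≤ (π a + 1) ^ 4) : p ^ 3 ≤ π p ^ 4 := by
  obtain ⟨hap, hpb⟩ := hpab
  have : π a + 1 ≤ π p := (Nat.count_monotone _ (by omega : a + 1 ≤ p)).trans_lt
    (Nat.count_strict_mono hp p.lt_succ_self)
  calc p ^ 3 ≤ b ^ 3 := Nat.pow_le_pow_left hpb 3
    _ ≤ (π a + 1) ^ 4 := h
    _ ≤ π p ^ 4 := Nat.pow_le_pow_left this 4

def checkCheckpoints : ℕ → ℕ → List ℕ → Bool
  | _, _, [] => true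
  -- `a ≤ b` guards the truncated subtraction `b - a`
  | a, c, b :: bs => Nat.ble a b && Nat.ble (b ^ 3) ((c + 1) ^ 4) &&
      checkCheckpoints b (c + primeCountIn 17 (a + 1) (b - a)) bs

theorem pow_three_le_primeCounting_pow_four_of_checkCheckpoints {bs : List ℕ} {a p : ℕ}
    (h : checkCheckpoints a (π a) bs = true) (hp : p.Prime) (hap : a < p)
    (hpb : ∃ b ∈ bs, p ≤ b) : p ^ 3 ≤ π p ^ 4 := by
  induction bs generalizing a with
  | nil => simp at hpb
  | cons b bs ih =>
    simp only [checkCheckpoints, Bool.and_eq_true, Nat.ble_eq] at h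
    obtain ⟨⟨hab, hb⟩, h⟩ := h
    by_cases hpb' : p ≤ b
    · exact pow_three_le_primeCounting_pow_four_of_mem_Ioc hp ⟨hap, hpb'⟩ hb
    · have hπb : π a + primeCountIn 17 (a + 1) (b - a) = π b := by
        rw [Nat.primeCounting, Nat.primeCounting', count_add_primeCountIn]
        congr 1; omega
      rw [hπb] at h
      exact ih h (by omega) (by simpa [hpb'] using hpb)

theorem primeCounting_1612 : π 1612 = 254 :=
  (count_add_primeCountIn 17 0 1613).symm.trans (by decide +kernel)

set_option maxHeartbeats 0 in
/-- Each checkpoint `b` is the largest number with `b ^ 3 ≤ (π a + 1) ^ 4`, `a` being the previous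
one, capped at `17 ^ 4 - 1`. -/
theorem checkCheckpoints_1612 : checkCheckpoints 1612 254
    [1617, 1625, 1642, 1659, 1667, 1685, 1693, 1702, 1719, 1727, 1745, 1762, 1788, 1814, 1840,
      1858, 1866, 1875, 1901, 1937, 1972, 1990, 2017, 2071, 2125, 2188, 2262, 2335, 2429, 2570,
      2713, 2917, 3175, 3448, 3779, 4256, 4881, 5676, 6789, 8356, 10631, 14159, 19781, 29308,
      46861, 81938, 83520] = true := by
  decide +kernel

theorem four_mul_pow_three_add_five_mul_log_le {y : ℝ} (hy : 17 ≤ y) :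
    (4 * y ^ 3 + 5) * log y ≤ y ^ 4 * log 2 := by
  have hlog2 := log_two_gt_d9
  have hlogy : log y ≤ y / 16 + 4 * log 2 - 1 := by
    have := log_le_sub_one_of_pos (show 0 < y / 16 by positivity)
    rw [log_div (by positivity) (by norm_num), show (16 : ℝ) = 2 ^ 4 by norm_num,
      log_pow] at this
    push_cast at this
    linarith
  have hy3 : 17 ^ 3 ≤ y ^ 3 := by gcongr
  have hpos : 0 ≤ y ^ 4 - 16 * y ^ 3 - 20 := by nlinarith
  calc (4 * y ^ 3 + 5) * log y ≤ (4 * y ^ 3 + 5) * (y / 16 + 4 * log 2 - 1) := by gcongr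
    _ ≤ y ^ 4 * log 2 := by
      nlinarith [mul_nonneg (sub_nonneg.mpr hlog2.le) hpos,
        mul_nonneg (sub_nonneg.mpr hy) (sub_nonneg.mpr hy3)]

theorem rpow_three_div_four_le_chebyshev_bound {x : ℝ} (hx : 17 ^ 4 ≤ x) :
    x ^ (3 / 4 : ℝ) ≤ (x * log 2 - log (x + 1)) / log x := by
  have hx0 : 0 ≤ x := by positivity
  set y := x ^ (1 / 4 : ℝ) with hy_def
  have hxy : x = y ^ 4 := by
    rw [hy_def, ← rpow_natCast, ← rpow_mul hx0]; norm_num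
  have hy : 17 ≤ y := by
    rw [hxy] at hx
    exact le_of_pow_le_pow_left₀ (by norm_num) (by positivity) hx
  have h34 : x ^ (3 / 4 : ℝ) = y ^ 3 := by
    rw [hy_def, ← rpow_natCast, ← rpow_mul hx0]; norm_num
  have hlogy : 0 < log y := log_pos (by linarith)
  have hlog1 : log (x + 1) ≤ 5 * log y :=
    calc log (x + 1) ≤ log (y ^ 5) := log_le_log (by positivity) (by
          rw [hxy]; nlinarith [pow_le_pow_left₀ (by norm_num : (0 : ℝ) ≤ 17) hy 4])
      _ = 5 * log y := by rw [log_pow]; norm_num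
  rw [h34, hxy, log_pow, le_div_iff₀ (by positivity)]
  have := four_mul_pow_three_add_five_mul_log_le hy
  rw [hxy] at hlog1
  push_cast
  nlinarith

theorem pow_three_le_primeCounting_pow_four_of_le {x : ℕ} (hx : 17 ^ 4 ≤ x) :
    x ^ 3 ≤ π x ^ 4 := by
  have hxR : (17 : ℝ) ^ 4 ≤ x := by exact_mod_cast hx
  have h := pow_le_pow_left₀ (by positivity)
    ((rpow_three_div_four_le_chebyshev_bound hxR).trans (Chebyshev.pi_ge x)) 4
  rw [← rpow_natCast, ← rpow_mul (by positivity)] at h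
  norm_num at h
  exact_mod_cast h

theorem pow_three_le_primeCounting_pow_four {p : ℕ} (hp : p.Prime) (h : 255 ≤ π p) :
    p ^ 3 ≤ π p ^ 4 := by
  rcases lt_or_ge p (17 ^ 4) with hp' | hp'
  · have h1612 : 1612 < p := by
      by_contra! hle
      have := Nat.monotone_primeCounting hle
      rw [primeCounting_1612] at this
      omega
    have hcheck := checkCheckpoints_1612
    rw [← primeCounting_1612] at hcheck
    exact pow_three_le_primeCounting_pow_four_of_checkCheckpoints hcheck hp h1612
      ⟨83520, by simp, by omega⟩
  · exact pow_three_le_primeCounting_pow_four_of_le hp'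

theorem primeCounting_nthPrime {n : ℕ} (hn : 1 ≤ n) : π (nthPrime n) = n := by
  rw [nthPrime, Nat.primeCounting, Nat.primeCounting', Nat.count_succ, ← Nat.primeCounting',
    Nat.primeCounting'_nth_eq, if_pos (Nat.prime_nth_prime _)]
  omega

/-- For every integer `n ≥ 255` one has `log n ≥ 0.75 · log p_n`. -/
theorem log_ge_mul_log_nthPrime (n : ℕ) (hn : 255 ≤ n) :
    Real.log n ≥ 0.75 * Real.log (nthPrime n) := by
  have hπ := primeCounting_nthPrime (n := n) (by omega)
  have hprime : (nthPrime n).Prime := Nat.prime_nth_prime _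
  have hpow : nthPrime n ^ 3 ≤ n ^ 4 := by
    have := pow_three_le_primeCounting_pow_four hprime (by rwa [hπ])
    rwa [hπ] at this
  have hp : (0 : ℝ) < nthPrime n := by exact_mod_cast hprime.pos
  have h := log_le_log (by positivity)
    (by exact_mod_cast hpow : (nthPrime n : ℝ) ^ 3 ≤ (n : ℝ) ^ 4)
  rw [log_pow, log_pow] at h
  push_cast at h
  norm_num
  linarith
end

section
/- Let m ≥ 2 be a natural number, let a_2, …, a_m be real numbers, and let r, s be real numbers with 1 < r ≤ s. Then ∑_{k=2}^{m} a_k·∫_r^s x/log^k x dx = t_{m−1,1}·∫_r^s x/log² x dx − ∑_{k=2}^{m−1} t_{m−1,k}·(s²/log^k s − r²/log^k r), where t_{i,j} = (j−1)!·∑_{l=j}^{i} 2^{l−j}·a_{l+1}/l!. -/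
open Real

/-- `t a i j = (j−1)! · ∑_{l=j}^{i} 2^{l−j} · a_{l+1} / l!`. -/
noncomputable def t (a : ℕ → ℝ) (i j : ℕ) : ℝ :=
  (Nat.factorial (j - 1) : ℝ) *
    ∑ l ∈ Finset.Icc j i, 2 ^ (l - j) * a (l + 1) / (Nat.factorial l : ℝ)

/-!
Write `I k = ∫_r^s x / log^k x` and `B k = s² / log^k s - r² / log^k r`. Integrating
`(x² / log^k x)' = 2x / log^k x - k x / log^(k+1) x` over `[r, s]` gives the recurrence
`2 I k - k I (k+1) = B k`. Unrolled from `k = 2` it yields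
`I (l+1) = (2^(l-1) I 2 - ∑_{j=2}^{l} (j-1)! 2^(l-j) B j) / l!`, and summing these against
`a (l+1)` and exchanging the two sums produces the coefficients `t`.
-/

open Finset
open scoped Nat

theorem hasDerivAt_sq_div_log_pow (k : ℕ) {x : ℝ} (hx : x ≠ 0) (hlog : log x ≠ 0) :
    HasDerivAt (fun y => y ^ 2 / log y ^ k)
      (2 * (x / log x ^ k) - k * (x / log x ^ (k + 1))) x := by
  refine ((hasDerivAt_pow 2 x).fun_div ((hasDerivAt_log hx).fun_pow k)
    (pow_ne_zero k hlog)).congr_deriv ?_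
  rcases k with _ | k
  · simp
  · rw [Nat.add_sub_cancel]
    field_simp
    ring

theorem continuousOn_div_log_pow (k : ℕ) :
    ContinuousOn (fun x => x / log x ^ k) (Set.Ioi 1) :=
  continuousOn_id.div ((continuousOn_log.mono fun _ hx => (zero_lt_one.trans hx).ne').pow k)
    fun _ hx => pow_ne_zero k (log_pos hx).ne'

section Integrals

variable {r s : ℝ}

theorem uIcc_subset_Ioi_one (hr : 1 < r) (hs : 1 < s) : Set.uIcc r s ⊆ Set.Ioi 1 :=
  fun _ hx => (lt_min hr hs).trans_le hx.1

theorem intervalIntegrable_div_log_pow (k : ℕ) (hr : 1 < r) (hs : 1 < s) :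
    IntervalIntegrable (fun x => x / log x ^ k) MeasureTheory.volume r s :=
  ((continuousOn_div_log_pow k).mono (uIcc_subset_Ioi_one hr hs)).intervalIntegrable

theorem integral_div_log_pow_recurrence (k : ℕ) (hr : 1 < r) (hs : 1 < s) :
    2 * (∫ x in r..s, x / log x ^ k) - k * ∫ x in r..s, x / log x ^ (k + 1) =
      s ^ 2 / log s ^ k - r ^ 2 / log r ^ k := by
  have hderiv : ∀ x ∈ Set.uIcc r s, HasDerivAt (fun y => y ^ 2 / log y ^ k)
      (2 * (x / log x ^ k) - k * (x / log x ^ (k + 1))) x := fun x hx =>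
    have hx1 : 1 < x := uIcc_subset_Ioi_one hr hs hx
    hasDerivAt_sq_div_log_pow k (zero_lt_one.trans hx1).ne' (log_pos hx1).ne'
  have hint_k := intervalIntegrable_div_log_pow k hr hs
  have hint_succ := intervalIntegrable_div_log_pow (k + 1) hr hs
  rw [← intervalIntegral.integral_eq_sub_of_hasDerivAt hderiv
      ((hint_k.const_mul 2).sub (hint_succ.const_mul k)),
    intervalIntegral.integral_sub (hint_k.const_mul 2) (hint_succ.const_mul k),
    intervalIntegral.integral_const_mul, intervalIntegral.integral_const_mul]

end Integrals




section Recurrence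

variable {I B : ℕ → ℝ}

theorem eq_sub_sum_of_recurrence (hrec : ∀ k, 2 ≤ k → 2 * I k - k * I (k + 1) = B k)
    {l : ℕ} (hl : 1 ≤ l) :
    I (l + 1) = 2 ^ (l - 1) / l ! * I 2 - ∑ j ∈ Icc 2 l, (j - 1)! * 2 ^ (l - j) / l ! * B j := by
  induction l, hl using Nat.le_induction with
  | base => simp
  | succ l hl ih =>
    have hstep : ∑ j ∈ Icc 2 l, ((j - 1)! * 2 ^ (l + 1 - j) / (l + 1)! : ℝ) * B j
        = 2 / (l + 1) * ∑ j ∈ Icc 2 l, (j - 1)! * 2 ^ (l - j) / l ! * B j := by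
      rw [mul_sum]
      refine sum_congr rfl fun j hj => ?_
      rw [Nat.sub_add_comm (mem_Icc.1 hj).2, pow_succ, Nat.factorial_succ]
      push_cast
      field_simp
    rw [sum_Icc_succ_top (by omega), hstep, add_tsub_cancel_right, Nat.sub_self, pow_zero,
      Nat.factorial_succ, ← pow_sub_one_mul (by omega : l ≠ 0)]
    generalize ∑ j ∈ Icc 2 l, ((j - 1)! * 2 ^ (l - j) / l ! : ℝ) * B j = S at ih ⊢
    have hrec_l := hrec (l + 1) (by omega)
    push_cast at hrec_l ⊢
    field_simp at ih ⊢
    linear_combination (-(l ! : ℝ)) * hrec_l + 2 * ih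

theorem sum_mul_eq_of_recurrence (hrec : ∀ k, 2 ≤ k → 2 * I k - k * I (k + 1) = B k)
    (a : ℕ → ℝ) (M : ℕ) :
    ∑ k ∈ Icc 2 (M + 1), a k * I k = t a M 1 * I 2 - ∑ j ∈ Icc 2 M, t a M j * B j := by
  have hterm : ∀ l ∈ Icc 1 M, a (l + 1) * I (l + 1) = 2 ^ (l - 1) * a (l + 1) / l ! * I 2 -
      ∑ j ∈ Icc 2 l, (j - 1)! * (2 ^ (l - j) * a (l + 1) / l !) * B j := by
    intro l hl
    rw [eq_sub_sum_of_recurrence hrec (mem_Icc.1 hl).1, mul_sub, mul_sum]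
    congr 1
    · ring
    · exact sum_congr rfl fun j _ => by ring
  rw [← map_add_right_Icc 1 M 1, sum_map]
  simp only [addRightEmbedding_apply]
  rw [sum_congr rfl hterm, sum_sub_distrib, ← sum_mul,
    sum_comm' (t' := Icc 2 M) (s' := fun j => Icc j M) (by intro l j; simp only [mem_Icc]; omega)]
  simp [t, mul_sum, sum_mul]

end Recurrence

theorem sum_integral_div_log_pow_general (m : ℕ) (a : ℕ → ℝ) (r s : ℝ)
    (hr : 1 < r) (hrs : r ≤ s) :
    (∑ k ∈ Finset.Icc 2 m, a k * ∫ x in r..s, x / Real.log x ^ k) =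
      t a (m - 1) 1 * (∫ x in r..s, x / Real.log x ^ 2) -
        ∑ k ∈ Finset.Icc 2 (m - 1),
          t a (m - 1) k * (s ^ 2 / Real.log s ^ k - r ^ 2 / Real.log r ^ k) := by
  rcases m with _ | M
  · simp [t]
  · exact sum_mul_eq_of_recurrence
      (fun k _ => integral_div_log_pow_recurrence k hr (hr.trans_le hrs)) a M

/-- Let `m ≥ 2`, let `a_2, …, a_m` be real numbers and `1 < r ≤ s`. Then
`∑_{k=2}^{m} a_k · ∫_r^s x/log^k x dx
  = t_{m−1,1} · ∫_r^s x/log² x dx − ∑_{k=2}^{m−1} t_{m−1,k} · (s²/log^k s − r²/log^k r)`. -/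
theorem sum_integral_div_log_pow (m : ℕ) (hm : 2 ≤ m) (a : ℕ → ℝ) (r s : ℝ)
    (hr : 1 < r) (hrs : r ≤ s) :
    (∑ k ∈ Finset.Icc 2 m, a k * ∫ x in r..s, x / Real.log x ^ k) =
      t a (m - 1) 1 * (∫ x in r..s, x / Real.log x ^ 2) -
        ∑ k ∈ Finset.Icc 2 (m - 1),
          t a (m - 1) k * (s ^ 2 / Real.log s ^ k - r ^ 2 / Real.log r ^ k) :=
  sum_integral_div_log_pow_general m a r s hr hrs
end
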